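/- arXiv:1705.10933 — 6 statements merged into one kernel-verified Lean document; each statement's English description precedes it below -/
import Mathlib

section
/- If p is a prime, e ≥ 1, and σ_∞(p^e) is a prime power (a power q^f of a prime q with f ≥ 1), then either e = 1 and p is a Mersenne prime (p + 1 is a power of 2), or p = 2, e = 2^l for some l ≥ 0, and σ_∞(p^e) = 2^{2^l} + 1 is a Fermat prime. -/
/-!
For a prime `p`, `σ_∞(p^e) = ∏ (p^{2^j} + 1)` over the bits `j` of `e`, so if it equals `q^f`
then `q` divides every factor. For `p = 2` the factors are distinct Fermat numbers, which are
pairwise coprime, so `e = 2^l` has a single bit and `q^f = 2^{2^l} + 1`. Then `f = 1`: for even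
`f`, `x^2 - 1 = 2^{2^l}` makes `x - 1` and `x + 1` powers of two, hence `x = 3`, which is
impossible; for odd `f`, the odd geometric sum `1 + q + ⋯ + q^{f-1}` divides `q^f - 1 = 2^{2^l}`.
For odd `p` every factor is even, so `q = 2`; but a factor with `j ≥ 1` is `x^2 + 1` with `x` odd,
which is `2 mod 4`, so `e = 1`.
-/

/-- The sum of infinitary divisors of `n`: for `n = ∏ p ^ e_p`, it equals
`∏_p ∏_{j : bit j of e_p is 1} (p ^ 2 ^ j + 1)`. -/
def infsigma (n : ℕ) : ℕ :=
  n.factorization.prod fun p e =>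
    ∏ j ∈ Finset.range e, if e.testBit j then p ^ 2 ^ j + 1 else 1

namespace Nat

lemma eq_two_pow_of_forall_testBit_imp_eq {e l : ℕ} (he : e ≠ 0)
    (h : ∀ j, e.testBit j → j = l) : e = 2 ^ l := by
  obtain ⟨i, hi⟩ := exists_testBit_of_ne_zero he
  obtain rfl := h i hi
  refine eq_of_testBit_eq fun j => ?_
  rw [testBit_two_pow]
  by_cases hj : e.testBit j
  · simp [hi, h j hj]
  · simp only [hj, Bool.false_eq, decide_eq_false_iff_not]
    rintro rfl
    exact hj hi

lemma Prime.dvd_of_dvd_pow_of_ne_one {q a f : ℕ} (hq : q.Prime) (h : a ∣ q ^ f) (ha : a ≠ 1) :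
    q ∣ a := by
  obtain ⟨k, -, rfl⟩ := (dvd_prime_pow hq).1 h
  exact dvd_pow_self q (by rintro rfl; exact ha (pow_zero q))

lemma eq_one_of_two_pow_add_two_eq_two_pow {a b : ℕ} (h : 2 ^ a + 2 = 2 ^ b) : a = 1 := by
  have := Nat.two_pow_pos a
  rcases a with _ | _ | a <;> rcases b with _ | _ | b <;>
    simp only [pow_zero, pow_succ] at * <;> omega

lemma eq_three_of_sq_eq_two_pow_add_one {x m : ℕ} (h : x ^ 2 = 2 ^ m + 1) : m = 3 := by
  obtain ⟨t, rfl⟩ : ∃ t, x = t + 1 := ⟨x - 1, by cases x <;> simp_all⟩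
  have hprod : t * (t + 2) = 2 ^ m := by linarith
  obtain ⟨a, -, ha⟩ := (dvd_prime_pow prime_two).1 (Dvd.intro _ hprod)
  obtain ⟨b, -, hb⟩ := (dvd_prime_pow prime_two).1 (Dvd.intro_left _ hprod)
  have ht : t = 2 := by
    rw [ha, eq_one_of_two_pow_add_two_eq_two_pow (a := a) (b := b) (by rw [← ha, hb]), pow_one]
  subst ht
  exact Nat.pow_right_injective le_rfl (by simpa using hprod.symm : 2 ^ m = 2 ^ 3)

lemma eq_one_of_pow_eq_two_pow_add_one_of_odd {q f m : ℕ} (hq : Odd q) (hf : Odd f)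
    (h : q ^ f = 2 ^ m + 1) : f = 1 := by
  obtain ⟨x, rfl⟩ : ∃ x, q = x + 1 := ⟨q - 1, by have := hq.pos; omega⟩
  have hS : (∑ i ∈ Finset.range f, (x + 1) ^ i) * x = 2 ^ m := by
    have := geom_sum_mul_add x f
    omega
  set S := ∑ i ∈ Finset.range f, (x + 1) ^ i
  have hS_odd : Odd S := by
    rw [Finset.odd_sum_iff_odd_card_odd, Finset.filter_true_of_mem fun i _ => hq.pow,
      Finset.card_range]
    exact hf
  have hS_one : S = 1 :=
    (Coprime.pow_right m (coprime_two_right.2 hS_odd)).eq_one_of_dvd (Dvd.intro x hS)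
  by_contra hf1
  have hq_le : x + 1 ≤ S := by
    simpa using Finset.single_le_sum (fun i _ => Nat.zero_le ((x + 1) ^ i))
      (Finset.mem_range.2 (by have := hf.pos; omega : 1 < f))
  have hx : x ≠ 0 := by rintro rfl; simp at h
  omega

lemma Prime.eq_one_of_pow_eq_fermatNumber {q f l : ℕ} (hq : q.Prime) (hf : 0 < f)
    (h : q ^ f = fermatNumber l) : f = 1 := by
  rcases f.even_or_odd with ⟨g, rfl⟩ | hf_odd
  · have h2l : 2 ^ l = 3 :=
      eq_three_of_sq_eq_two_pow_add_one (by rw [← pow_mul, mul_two, h, fermatNumber])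
    rcases l with _ | l <;> simp only [pow_zero, pow_succ] at h2l <;> omega
  · refine eq_one_of_pow_eq_two_pow_add_one_of_odd (hq.odd_of_ne_two ?_) hf_odd h
    rintro rfl
    exact (odd_fermatNumber l).not_two_dvd_nat (h ▸ dvd_pow_self 2 hf.ne')

lemma sq_add_one_ne_two_pow {x m : ℕ} (hx : Odd x) (hx1 : 1 < x) : x ^ 2 + 1 ≠ 2 ^ m := by
  obtain ⟨t, rfl⟩ := hx
  rcases m with _ | _ | m <;> ring_nf <;> omega

lemma eq_zero_of_pow_two_pow_add_one_eq_two_pow {p j s : ℕ} (hp : Odd p) (hp1 : 1 < p)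
    (h : p ^ 2 ^ j + 1 = 2 ^ s) : j = 0 := by
  obtain _ | i := j
  · rfl
  · rw [pow_succ, pow_mul] at h
    exact absurd h (sq_add_one_ne_two_pow hp.pow (Nat.one_lt_pow (by positivity) hp1))

end Nat

lemma infsigma_prime_pow {p : ℕ} (hp : p.Prime) (e : ℕ) :
    infsigma (p ^ e) = ∏ j ∈ Finset.range e, if e.testBit j then p ^ 2 ^ j + 1 else 1 := by
  rw [infsigma, hp.factorization_pow]
  exact Finsupp.prod_single_index (by simp)

lemma pow_two_pow_add_one_dvd_infsigma {p e j : ℕ} (hp : p.Prime) (hj : e.testBit j) :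
    p ^ 2 ^ j + 1 ∣ infsigma (p ^ e) := by
  rw [infsigma_prime_pow hp]
  have hje : j < e := j.lt_two_pow_self.trans_le (Nat.ge_two_pow_of_testBit hj)
  simpa [hj] using Finset.dvd_prod_of_mem (fun j => if e.testBit j then p ^ 2 ^ j + 1 else 1)
    (Finset.mem_range.2 hje)

lemma infsigma_prime_pow_two_pow {p : ℕ} (hp : p.Prime) (l : ℕ) :
    infsigma (p ^ 2 ^ l) = p ^ 2 ^ l + 1 := by
  simp [infsigma_prime_pow hp, Nat.testBit_two_pow, Finset.prod_ite_eq, l.lt_two_pow_self]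

theorem infsigma_prime_pow_eq_prime_pow (p e : ℕ) (hp : p.Prime) (he : 1 ≤ e)
    (h : IsPrimePow (infsigma (p ^ e))) :
    (e = 1 ∧ ∃ k : ℕ, p + 1 = 2 ^ k) ∨
    (p = 2 ∧ ∃ l : ℕ, e = 2 ^ l ∧ infsigma (p ^ e) = 2 ^ 2 ^ l + 1 ∧
      Nat.Prime (2 ^ 2 ^ l + 1)) := by
  obtain ⟨q, f, hq, hf, hqf⟩ := h
  rw [← Nat.prime_iff] at hq
  have hfactor : ∀ j, e.testBit j → p ^ 2 ^ j + 1 ∣ q ^ f := fun j hj =>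
    hqf ▸ pow_two_pow_add_one_dvd_infsigma hp hj
  obtain ⟨l, hl⟩ := Nat.exists_testBit_of_ne_zero (by omega : e ≠ 0)
  rcases eq_or_ne p 2 with rfl | hp2
  · have hq_dvd : ∀ j, e.testBit j → q ∣ Nat.fermatNumber j := fun j hj =>
      hq.dvd_of_dvd_pow_of_ne_one (hfactor j hj) (Nat.fermatNumber_ne_one j)
    obtain rfl : e = 2 ^ l := Nat.eq_two_pow_of_forall_testBit_imp_eq (by omega) fun j hj => by
      by_contra hjl
      exact hq.one_lt.ne' <| Nat.eq_one_of_dvd_coprimes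
        (Nat.coprime_fermatNumber_fermatNumber hjl) (hq_dvd j hj) (hq_dvd l hl)
    rw [infsigma_prime_pow_two_pow hp] at hqf ⊢
    obtain rfl := hq.eq_one_of_pow_eq_fermatNumber hf hqf
    rw [pow_one] at hqf
    exact Or.inr ⟨rfl, l, rfl, rfl, hqf ▸ hq⟩
  · have hp_odd := hp.odd_of_ne_two hp2
    obtain rfl : q = 2 := ((Nat.prime_dvd_prime_iff_eq Nat.prime_two hq).1 <|
      Nat.prime_two.dvd_of_dvd_pow <| hp_odd.pow.add_one.two_dvd.trans (hfactor l hl)).symm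
    obtain rfl : e = 2 ^ 0 := Nat.eq_two_pow_of_forall_testBit_imp_eq (by omega) fun j hj => by
      obtain ⟨s, -, hs⟩ := (Nat.dvd_prime_pow Nat.prime_two).1 (hfactor j hj)
      exact Nat.eq_zero_of_pow_two_pow_add_one_eq_two_pow hp_odd hp.one_lt hs
    rw [infsigma_prime_pow_two_pow hp, pow_zero, pow_one] at hqf
    exact Or.inl ⟨rfl, f, hqf.symm⟩
end

section
/- If p and q are odd primes and k > 0 is an integer satisfying p^{2^k} + 1 = 2q and 2^{2^{k+1}} ≡ 1 (mod q), then p = 3, q = 5, and k = 1. -/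
theorem Nat.two_mul_two_pow_add_one_lt_three_pow {n : ℕ} (hn : 3 ≤ n) :
    2 * 2 ^ n + 1 < 3 ^ n := by
  induction n, hn using Nat.le_induction with
  | base => norm_num
  | succ n _ ih =>
    rw [pow_succ, pow_succ]
    omega

theorem Nat.Prime.le_add_one_of_sq_modEq_one {q a : ℕ} (hq : q.Prime) (ha : 2 ≤ a)
    (h : a ^ 2 ≡ 1 [MOD q]) : q ≤ a + 1 := by
  have hdvd : q ∣ (a + 1) * (a - 1) := by
    rw [← Nat.sq_sub_sq a 1, one_pow]
    exact (Nat.modEq_iff_dvd' (Nat.one_le_pow _ _ (by omega))).mp h.symm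
  rcases hq.dvd_mul.mp hdvd with hd | hd
  · exact Nat.le_of_dvd (by omega) hd
  · exact (Nat.le_of_dvd (by omega) hd).trans (by omega)

theorem pow_two_pow_add_one_eq_two_mul_prime_general (p q k : ℕ) (hp : p.Prime) (hq : q.Prime)
    (hpodd : Odd p) (hk : 0 < k)
    (h : p ^ 2 ^ k + 1 = 2 * q) (hmod : 2 ^ 2 ^ (k + 1) ≡ 1 [MOD q]) :
    p = 3 ∧ q = 5 ∧ k = 1 := by
  have hp3 : 3 ≤ p := by
    have := hp.two_le
    obtain ⟨m, rfl⟩ := hpodd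
    omega
  have hq_le : q ≤ 2 ^ 2 ^ k + 1 := by
    refine hq.le_add_one_of_sq_modEq_one (Nat.le_self_pow (by positivity) 2) ?_
    rwa [← pow_mul, ← pow_succ]
  have hk1 : k = 1 := by
    have hexp : 2 ^ k ≤ 2 := by
      by_contra! hlt
      have := Nat.two_mul_two_pow_add_one_lt_three_pow hlt
      have := Nat.pow_le_pow_left hp3 (2 ^ k)
      omega
    have : k ≤ 1 := (Nat.pow_le_pow_iff_right one_lt_two).mp (by rwa [pow_one])
    omega
  subst hk1
  have hp_sq : 3 ^ 2 ≤ p ^ 2 := Nat.pow_le_pow_left hp3 2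
  norm_num at h hq_le
  have hq5 : q = 5 := by omega
  refine ⟨?_, hq5, rfl⟩
  nlinarith

theorem pow_two_pow_add_one_eq_two_mul_prime (p q k : ℕ) (hp : p.Prime) (hq : q.Prime)
    (hpodd : Odd p) (hqodd : Odd q) (hk : 0 < k)
    (h : p ^ 2 ^ k + 1 = 2 * q) (hmod : 2 ^ 2 ^ (k + 1) ≡ 1 [MOD q]) :
    p = 3 ∧ q = 5 ∧ k = 1 :=
  pow_two_pow_add_one_eq_two_mul_prime_general p q k hp hq hpodd hk h hmod
end

section
/- If N is a positive integer with σ_∞(σ_∞(N)) = 2N and σ_∞(N) is either odd or a prime power, then N = 2. -/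
def infsigmaFactor (p e : ℕ) : ℕ :=
  ∏ j ∈ Finset.range e, if e.testBit j then p ^ 2 ^ j + 1 else 1

theorem infsigma_eq_factorization_prod (n : ℕ) :
    infsigma n = n.factorization.prod infsigmaFactor := rfl

theorem infsigma_zero : infsigma 0 = 1 := by
  simp [infsigma]

theorem infsigma_one : infsigma 1 = 1 := by
  simp [infsigma]

theorem infsigma_prime_pow_s12 {p : ℕ} (hp : p.Prime) (e : ℕ) :
    infsigma (p ^ e) = infsigmaFactor p e := by
  rw [infsigma_eq_factorization_prod, hp.factorization_pow, Finsupp.prod_single_index]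
  rfl

theorem pow_two_pow_add_one_dvd_infsigmaFactor {p e j : ℕ} (h : e.testBit j) :
    p ^ 2 ^ j + 1 ∣ infsigmaFactor p e := by
  have hj : j < e := Nat.lt_two_pow_self.trans_le (Nat.ge_two_pow_of_testBit h)
  simpa [infsigmaFactor, h] using
    Finset.dvd_prod_of_mem (fun j => if e.testBit j then p ^ 2 ^ j + 1 else 1)
      (Finset.mem_range.2 hj)

theorem infsigmaFactor_dvd_infsigma {n p : ℕ} (hn : n ≠ 0) (hp : p.Prime) (hpn : p ∣ n) :
    infsigmaFactor p (n.factorization p) ∣ infsigma n := by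
  rw [infsigma_eq_factorization_prod]
  exact Finset.dvd_prod_of_mem _ (by simp [hp, hpn, hn])

theorem pow_two_pow_add_one_dvd_infsigma_s12 {n p j : ℕ} (hn : n ≠ 0) (hp : p.Prime) (hpn : p ∣ n)
    (h : (n.factorization p).testBit j) : p ^ 2 ^ j + 1 ∣ infsigma n :=
  (pow_two_pow_add_one_dvd_infsigmaFactor h).trans (infsigmaFactor_dvd_infsigma hn hp hpn)

theorem odd_infsigmaFactor_two (e : ℕ) : Odd (infsigmaFactor 2 e) := by
  refine Finset.prod_induction _ Odd (fun _ _ => Odd.mul) odd_one fun j _ => ?_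
  split
  · exact (Nat.even_pow.2 ⟨even_two, by positivity⟩).add_one
  · exact odd_one

theorem exists_eq_two_pow_of_odd_infsigma {n : ℕ} (hn : n ≠ 0) (hodd : Odd (infsigma n)) :
    ∃ k, n = 2 ^ k := by
  refine ⟨_, Nat.eq_prime_pow_of_unique_prime_dvd hn fun {p} hp hpn => ?_⟩
  by_contra hp2
  obtain ⟨i, hi, -⟩ := Nat.exists_most_significant_bit (hp.factorization_pos_of_dvd hn hpn).ne'
  exact hodd.not_two_dvd_nat <|
    (hp.odd_of_ne_two hp2).pow.add_one.two_dvd.trans (pow_two_pow_add_one_dvd_infsigma_s12 hn hp hpn hi)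

theorem exists_eq_two_pow_of_isPrimePow_of_even {m : ℕ} (hm : IsPrimePow m) (heven : Even m) :
    ∃ k, m = 2 ^ k := by
  obtain ⟨p, k, hp, -, rfl⟩ := hm
  rw [← Nat.prime_iff] at hp
  have h2p : 2 ∣ p := Nat.prime_two.dvd_of_dvd_pow heven.two_dvd
  exact ⟨k, by rw [(Nat.prime_dvd_prime_iff_eq Nat.prime_two hp).1 h2p]⟩

theorem ne_two_pow_of_mod_four_eq_two {m : ℕ} (hm : 2 < m) (h : m % 4 = 2) (a : ℕ) :
    m ≠ 2 ^ a := by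
  rintro rfl
  match a with
  | 0 | 1 => norm_num at hm
  | a + 2 => simp [pow_add] at h

theorem exists_add_one_eq_two_pow_of_infsigma_eq_two_pow {M q t : ℕ} (hM : M ≠ 0) (hq : q.Prime)
    (hodd : Odd q) (hqM : q ∣ M) (ht : infsigma M = 2 ^ t) : ∃ a, q + 1 = 2 ^ a := by
  obtain ⟨i, hi, -⟩ := Nat.exists_most_significant_bit (hq.factorization_pos_of_dvd hM hqM).ne'
  obtain ⟨a, -, ha⟩ :=
    (Nat.dvd_prime_pow Nat.prime_two).1 (ht ▸ pow_two_pow_add_one_dvd_infsigma_s12 hM hq hqM hi)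
  cases i with
  | zero => exact ⟨a, by simpa using ha⟩
  | succ i =>
    refine absurd ha (ne_two_pow_of_mod_four_eq_two ?_ ?_ a)
    · have := Nat.le_self_pow (pow_ne_zero (i + 1) two_ne_zero) q
      have := hq.two_le
      omega
    · obtain ⟨k, hk⟩ := hodd.pow (n := 2 ^ i)
      rw [pow_succ, pow_mul, hk]
      ring_nf
      omega

theorem add_one_ne_two_pow_of_dvd_fermatNumber {j q : ℕ} (hj : 1 ≤ j) (hq : q.Prime)
    (hdvd : q ∣ Nat.fermatNumber j) (a : ℕ) : q + 1 ≠ 2 ^ a := by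
  have hq2 : q ≠ 2 := (Nat.odd_fermatNumber j).ne_two_of_dvd_nat hdvd
  obtain ⟨k, hk⟩ := Nat.pow_pow_add_primeFactors_one_lt hq hq2 hdvd
  obtain ⟨j, rfl⟩ := Nat.exists_eq_add_of_le' hj
  refine ne_two_pow_of_mod_four_eq_two ?_ ?_ a
  · have := hq.two_le
    omega
  · rw [hk, pow_add, pow_add]
    ring_nf
    omega

theorem eq_two_of_infsigma_infsigma_eq_two_mul_of_odd {N : ℕ} (h : infsigma (infsigma N) = 2 * N)
    (hodd : Odd (infsigma N)) : N = 2 := by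
  have hN : N ≠ 0 := by
    rintro rfl
    simp [infsigma_zero, infsigma_one] at h
  obtain ⟨e, rfl⟩ := exists_eq_two_pow_of_odd_infsigma hN hodd
  rw [infsigma_prime_pow_s12 Nat.prime_two] at h hodd
  have ht : infsigma (infsigmaFactor 2 e) = 2 ^ (e + 1) := by rw [h, pow_succ']
  have hbits : ∀ j ≥ 1, e.testBit j = false := by
    intro j hj
    by_contra hbit
    have hF : Nat.fermatNumber j ∣ infsigmaFactor 2 e :=
      pow_two_pow_add_one_dvd_infsigmaFactor (Bool.not_eq_false _ ▸ hbit)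
    obtain ⟨q, hq, hqF⟩ := Nat.exists_prime_and_dvd (Nat.fermatNumber_ne_one j)
    obtain ⟨a, ha⟩ := exists_add_one_eq_two_pow_of_infsigma_eq_two_pow hodd.pos.ne' hq
      ((Nat.odd_fermatNumber j).of_dvd_nat hqF) (hqF.trans hF) ht
    exact add_one_ne_two_pow_of_dvd_fermatNumber hj hq hqF a ha
  have he : e < 2 := by simpa using Nat.lt_pow_two_of_testBit e hbits
  interval_cases e
  · simp [infsigmaFactor, infsigma_one] at h
  · rfl

theorem superperfect_of_infsigma_odd_or_prime_pow_general (N : ℕ)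
    (h : infsigma (infsigma N) = 2 * N)
    (hcase : Odd (infsigma N) ∨ IsPrimePow (infsigma N)) : N = 2 := by
  refine eq_two_of_infsigma_infsigma_eq_two_mul_of_odd h (hcase.elim id fun hpp => ?_)
  by_contra heven
  obtain ⟨k, hk⟩ := exists_eq_two_pow_of_isPrimePow_of_even hpp (Nat.not_odd_iff_even.1 heven)
  have hodd := odd_infsigmaFactor_two k
  rw [← infsigma_prime_pow_s12 Nat.prime_two, ← hk, h] at hodd
  exact Nat.not_odd_iff_even.2 (even_two_mul N) hodd

theorem superperfect_of_infsigma_odd_or_prime_pow (N : ℕ) (hN : 0 < N)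
    (h : infsigma (infsigma N) = 2 * N)
    (hcase : Odd (infsigma N) ∨ IsPrimePow (infsigma N)) : N = 2 :=
  superperfect_of_infsigma_odd_or_prime_pow_general N h hcase
end

section
/- If N is a positive integer with σ_∞(σ_∞(N)) = 2N and σ_∞(N) = 2q for some odd prime q, then N = 9 (and q = 5). -/
open Finset

lemma le_of_dvd_two_mul_prime {q d : ℕ} (hq : q.Prime) (hd : d ∣ 2 * q) (h3 : 3 ≤ d) :
    q ≤ d := by
  by_cases hqd : q ∣ d
  · exact Nat.le_of_dvd (by omega) hqd
  · have hdq : d.Coprime q := ((hq.coprime_iff_not_dvd).mpr hqd).symm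
    have := Nat.le_of_dvd two_pos (hdq.dvd_of_dvd_mul_right hd)
    omega

/-- Two factors `≥ 3` of `2 * q` would give `3 * q ≤ 2 * q`, since one of them is `≥ q`. -/
lemma Finset.exists_eq_singleton_of_prod_eq_two_mul_prime {ι : Type*} {s : Finset ι}
    {g : ι → ℕ} {q : ℕ} (hq : q.Prime) (hg : ∀ i ∈ s, 3 ≤ g i) (h : ∏ i ∈ s, g i = 2 * q) :
    ∃ i, s = {i} := by
  have hs : s.Nonempty := by
    rw [nonempty_iff_ne_empty]
    rintro rfl
    have := hq.two_le
    simp only [prod_empty] at h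
    omega
  refine card_eq_one.mp (le_antisymm (card_le_one.mpr fun i hi j hj => ?_) hs.card_pos)
  by_contra hij
  have hle := mul_le_prod (fun k hk => (hg k hk).trans' (by norm_num)) hi hj hij
  have hqi := le_of_dvd_two_mul_prime hq (h ▸ dvd_prod_of_mem g hi) (hg i hi)
  nlinarith [hg j hj, hq.two_le]

def infsigmaPrimePow (p e : ℕ) : ℕ :=
  ∏ j ∈ range e, if e.testBit j then p ^ 2 ^ j + 1 else 1

lemma infsigma_eq_prod (n : ℕ) :
    infsigma n = ∏ p ∈ n.primeFactors, infsigmaPrimePow p (n.factorization p) := by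
  rw [infsigma, Finsupp.prod, Nat.support_factorization]
  rfl

lemma infsigmaPrimePow_eq_prod_filter (p e : ℕ) :
    infsigmaPrimePow p e = ∏ j ∈ range e with e.testBit j, (p ^ 2 ^ j + 1) :=
  (prod_filter _ _).symm

lemma mem_range_of_testBit {e j : ℕ} (h : e.testBit j = true) : j ∈ range e :=
  mem_range.mpr (Nat.lt_two_pow_self.trans_le (Nat.ge_two_pow_of_testBit h))

lemma eq_two_pow_of_filter_testBit_eq_singleton {e i : ℕ}
    (h : {j ∈ range e | e.testBit j} = {i}) : e = 2 ^ i := by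
  refine Nat.eq_of_testBit_eq fun j => ?_
  have hj : j ∈ ({j ∈ range e | e.testBit j} : Finset ℕ) ↔ e.testBit j = true :=
    mem_filter.trans (and_iff_right_of_imp mem_range_of_testBit)
  rw [h, mem_singleton] at hj
  rw [Nat.testBit_two_pow, Bool.eq_iff_iff, ← hj, decide_eq_true_iff, eq_comm]

lemma three_le_pow_two_pow_add_one {p : ℕ} (hp : 2 ≤ p) (j : ℕ) : 3 ≤ p ^ 2 ^ j + 1 := by
  have := Nat.le_self_pow (pow_pos two_pos j).ne' p
  omega

lemma three_le_infsigmaPrimePow {p e : ℕ} (hp : 2 ≤ p) (he : e ≠ 0) :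
    3 ≤ infsigmaPrimePow p e := by
  obtain ⟨i, hi⟩ := Nat.exists_testBit_of_ne_zero he
  rw [infsigmaPrimePow_eq_prod_filter]
  exact (three_le_pow_two_pow_add_one hp i).trans
    (single_le_prod' (f := fun j => p ^ 2 ^ j + 1) (fun _ _ => Nat.le_add_left 1 _)
      (mem_filter.mpr ⟨mem_range_of_testBit hi, hi⟩))

lemma pow_add_one_eq_of_infsigmaPrimePow_eq_two_mul_prime {p e q : ℕ} (hp : 2 ≤ p)
    (hq : q.Prime) (h : infsigmaPrimePow p e = 2 * q) : p ^ e + 1 = 2 * q := by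
  rw [infsigmaPrimePow_eq_prod_filter] at h
  obtain ⟨i, hi⟩ := exists_eq_singleton_of_prod_eq_two_mul_prime hq
    (fun j _ => three_le_pow_two_pow_add_one hp j) h
  rwa [hi, prod_singleton, ← eq_two_pow_of_filter_testBit_eq_singleton hi] at h

lemma add_one_eq_of_infsigma_eq_two_mul_prime {n q : ℕ} (hq : q.Prime)
    (h : infsigma n = 2 * q) : n + 1 = 2 * q := by
  have hn : n ≠ 0 := by
    rintro rfl
    have := hq.two_le
    simp [infsigma] at h
    omega
  rw [infsigma_eq_prod] at h
  obtain ⟨p, hp⟩ := exists_eq_singleton_of_prod_eq_two_mul_prime hq (fun p hp =>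
    three_le_infsigmaPrimePow (Nat.prime_of_mem_primeFactors hp).two_le
      (Finsupp.mem_support_iff.mp (by rwa [Nat.support_factorization]))) h
  have hpow : n = p ^ n.factorization p := by
    conv_lhs => rw [← Nat.prod_factorization_pow_eq_self hn]
    rw [Finsupp.prod, Nat.support_factorization, hp, prod_singleton]
  rw [hp, prod_singleton] at h
  have hp2 : 2 ≤ p := (Nat.prime_of_mem_primeFactors (hp ▸ mem_singleton_self p)).two_le
  rw [hpow]
  exact pow_add_one_eq_of_infsigmaPrimePow_eq_two_mul_prime hp2 hq h

lemma infsigma_mul_of_prime {p q : ℕ} (hp : p.Prime) (hq : q.Prime) (hpq : p ≠ q) :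
    infsigma (p * q) = (p + 1) * (q + 1) := by
  rw [infsigma, Nat.factorization_mul hp.ne_zero hq.ne_zero, hp.factorization, hq.factorization,
    Finsupp.prod_add_index_of_disjoint (by simp [hpq]),
    Finsupp.prod_single_index (by simp), Finsupp.prod_single_index (by simp)]
  simp

theorem superperfect_of_infsigma_eq_two_mul_prime_general (N q : ℕ)
    (hq : q.Prime) (hqodd : Odd q) (hNq : infsigma N = 2 * q)
    (h : infsigma (infsigma N) = 2 * N) : N = 9 ∧ q = 5 := by
  have hN := add_one_eq_of_infsigma_eq_two_mul_prime hq hNq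
  have hq2 : q ≠ 2 := by rintro rfl; exact absurd hqodd (by decide)
  rw [hNq, infsigma_mul_of_prime Nat.prime_two hq hq2.symm] at h
  omega

theorem superperfect_of_infsigma_eq_two_mul_prime (N q : ℕ) (hN : 0 < N)
    (hq : q.Prime) (hqodd : Odd q) (hNq : infsigma N = 2 * q)
    (h : infsigma (infsigma N) = 2 * N) : N = 9 ∧ q = 5 :=
  superperfect_of_infsigma_eq_two_mul_prime_general N q hq hqodd hNq h
end

section
/- The only solution of the equation x^4 + 1 = 2y^2 in positive integers x, y is (x, y) = (1, 1). -/
/-!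
Squaring the equation gives `(2y)⁴ - (2x)⁴ = (2(x⁴ - 1))²`, so it suffices to know Fermat's right
triangle theorem: `a⁴ - b⁴ = c²` has no integer solution with `b c ≠ 0`. This goes by descent on
`|a|`. Dividing out `gcd(a, b)`, `(b², c, a²)` is a primitive Pythagorean triple.
* If `b` is odd, `b² = m² - n²` and `a² = m² + n²`, so `m⁴ - n⁴ = (a b)²` with `|m| < |a|`.
* If `b` is even, `b² = 2 m n` and `a² = m² + n²` with, say, `n = 2 r` even. As `m, r` are coprime
  with square product, `m² = u⁴` and `r² = v⁴`, so `(u², 2 v², a)` is again a primitive triple: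
  `u² = p² - q²`, `v² = p q`, `|a| = p² + q²`. Then `p² = e⁴`, `q² = f⁴`, and
  `e⁴ - f⁴ = u²` with `|e| < |a|`.
-/

def FermatRightTriangle (a b c : ℤ) : Prop :=
  b ≠ 0 ∧ c ≠ 0 ∧ a ^ 4 - b ^ 4 = c ^ 2

theorem Int.exists_sq_eq_pow_four_of_isCoprime {x y z : ℤ} (hxy : IsCoprime x y)
    (h : x * y = z ^ 2) : ∃ u, x ^ 2 = u ^ 4 := by
  obtain ⟨u, rfl | rfl⟩ := Int.sq_of_isCoprime hxy h <;> exact ⟨u, by ring⟩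

namespace FermatRightTriangle

variable {a b c : ℤ}

theorem ne_zero (h : FermatRightTriangle a b c) : a ≠ 0 := by
  rintro rfl
  obtain ⟨hb, -, h⟩ := h
  have : 0 < b ^ 4 := by positivity
  nlinarith [sq_nonneg c]

theorem exists_isCoprime (h : FermatRightTriangle a b c) :
    ∃ a' b' c', FermatRightTriangle a' b' c' ∧ IsCoprime a' b' ∧ a'.natAbs ≤ a.natAbs := by
  obtain ⟨g, a', b', hg, hgcd, rfl, rfl⟩ :=
    Int.exists_gcd_one' (Int.gcd_pos_of_ne_zero_left b h.ne_zero)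
  obtain ⟨hb, hc, h⟩ := h
  have hg0 : (g : ℤ) ≠ 0 := by positivity
  obtain ⟨c', rfl⟩ : (g : ℤ) ^ 2 ∣ c := by
    rw [← Int.pow_dvd_pow_iff two_ne_zero, ← h]
    exact ⟨a' ^ 4 - b' ^ 4, by ring⟩
  refine ⟨a', b', c', ⟨?_, ?_, ?_⟩, Int.isCoprime_iff_gcd_eq_one.mpr hgcd, ?_⟩
  · rintro rfl
    simp at hb
  · rintro rfl
    simp at hc
  · apply mul_left_cancel₀ (pow_ne_zero 4 hg0)
    linear_combination h
  · rw [Int.natAbs_mul, Int.natAbs_natCast]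
    exact Nat.le_mul_of_pos_right _ hg

theorem isCoprime_right (h : a ^ 4 - b ^ 4 = c ^ 2) (hab : IsCoprime a b) : IsCoprime b c := by
  have : IsCoprime b (c ^ 2 + b * b ^ 3) := by
    rw [show c ^ 2 + b * b ^ 3 = a ^ 4 by linear_combination -h]
    exact hab.symm.pow_right
  exact (IsCoprime.pow_right_iff two_pos).mp this.of_add_mul_left_right

theorem exists_natAbs_lt_of_odd (h : FermatRightTriangle a b c) (hab : IsCoprime a b)
    (hb : Odd b) : ∃ a' b' c', FermatRightTriangle a' b' c' ∧ a'.natAbs < a.natAbs := by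
  have ha0 := h.ne_zero
  obtain ⟨hb0, hc0, h⟩ := h
  have htriple : PythagoreanTriple (b ^ 2) c (a ^ 2) := by
    unfold PythagoreanTriple
    linear_combination -h
  obtain ⟨m, n, hb2, hc, ha2, -⟩ := htriple.coprime_classification'
    (Int.isCoprime_iff_gcd_eq_one.mp (isCoprime_right h hab).pow_left)
    (Int.odd_iff.mp hb.pow) (by positivity)
  have hn0 : n ≠ 0 := by
    rintro rfl
    simp_all
  refine ⟨m, n, a * b, ⟨hn0, mul_ne_zero ha0 hb0, ?_⟩, ?_⟩
  · linear_combination -a ^ 2 * hb2 - (m ^ 2 - n ^ 2) * ha2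
  · rw [Int.natAbs_lt_iff_sq_lt, ha2]
    have : 0 < n ^ 2 := by positivity
    linarith

theorem exists_natAbs_lt_of_sq_add_sq {m n a b : ℤ} (hmn : IsCoprime m n) (hm : Odd m)
    (hn : Even n) (ha : a ^ 2 = m ^ 2 + n ^ 2) (hb : b ^ 2 = 2 * m * n) (hb0 : b ≠ 0) :
    ∃ a' b' c', FermatRightTriangle a' b' c' ∧ a'.natAbs < a.natAbs := by
  obtain ⟨r, rfl⟩ := hn.two_dvd
  obtain ⟨b', rfl⟩ : 2 ∣ b := by
    rw [← Int.pow_dvd_pow_iff two_ne_zero, hb]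
    exact ⟨m * r, by ring⟩
  have hmr : m * r = b' ^ 2 := by linarith
  have hmr_coprime : IsCoprime m r := hmn.of_mul_right_right
  obtain ⟨u, hu⟩ := Int.exists_sq_eq_pow_four_of_isCoprime hmr_coprime hmr
  obtain ⟨v, hv⟩ := Int.exists_sq_eq_pow_four_of_isCoprime hmr_coprime.symm
    (show r * m = b' ^ 2 by linear_combination hmr)
  have hu0 : u ≠ 0 := by
    rintro rfl
    simp_all
  have hv0 : v ≠ 0 := by
    rintro rfl
    simp_all
  have huv : IsCoprime (u ^ 2) (2 * v ^ 2) := by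
    rw [← IsCoprime.pow_left_iff two_pos, ← IsCoprime.pow_right_iff two_pos]
    convert hmn.pow (m := 2) (n := 2) using 1
    · linear_combination -hu
    · linear_combination -4 * hv
  have hu_odd : Odd (u ^ 2) := by
    rw [← Int.odd_pow' two_ne_zero, ← pow_mul, ← hu]
    exact hm.pow
  have ha0 : a ≠ 0 := by
    rintro rfl
    have : 0 < u ^ 4 := by positivity
    nlinarith
  have htriple : PythagoreanTriple (u ^ 2) (2 * v ^ 2) |a| := by
    unfold PythagoreanTriple
    linear_combination -hu - 4 * hv - ha - sq_abs a
  obtain ⟨p, q, hu2, hv2, ha', hpq_gcd, -, -⟩ := htriple.coprime_classification'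
    (Int.isCoprime_iff_gcd_eq_one.mp huv) (Int.odd_iff.mp hu_odd) (abs_pos.mpr ha0)
  have hpq : p * q = v ^ 2 := by linarith
  have hpq_coprime := Int.isCoprime_iff_gcd_eq_one.mpr hpq_gcd
  obtain ⟨e, he⟩ := Int.exists_sq_eq_pow_four_of_isCoprime hpq_coprime hpq
  obtain ⟨f, hf⟩ := Int.exists_sq_eq_pow_four_of_isCoprime hpq_coprime.symm
    (show q * p = v ^ 2 by linear_combination hpq)
  have hq0 : q ≠ 0 := by
    rintro rfl
    simp_all
  refine ⟨e, f, u, ⟨?_, hu0, by linear_combination -he + hf - hu2⟩, ?_⟩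
  · rintro rfl
    simp_all
  · rw [Int.natAbs_lt_iff_sq_lt, ← sq_abs a]
    have : 0 < q ^ 2 := by positivity
    calc e ^ 2 ≤ (e ^ 2) ^ 2 := Int.le_self_sq _
      _ = p ^ 2 := by rw [he]; ring
      _ < |a| := by rw [ha']; linarith
      _ ≤ |a| ^ 2 := Int.le_self_sq _

theorem exists_natAbs_lt_of_even (h : FermatRightTriangle a b c) (hab : IsCoprime a b)
    (hb : Even b) : ∃ a' b' c', FermatRightTriangle a' b' c' ∧ a'.natAbs < a.natAbs := by
  have ha0 := h.ne_zero
  obtain ⟨hb0, -, h⟩ := h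
  have hbc := isCoprime_right h hab
  have hc : Odd c := by
    refine (Int.even_or_odd c).resolve_left fun hc => ?_
    have := hbc.isUnit_of_dvd' hb.two_dvd hc.two_dvd
    norm_num [Int.isUnit_iff] at this
  have htriple : PythagoreanTriple c (b ^ 2) (a ^ 2) := by
    unfold PythagoreanTriple
    linear_combination -h
  obtain ⟨m, n, -, hb2, ha2, hmn, hparity, -⟩ := htriple.coprime_classification'
    (Int.isCoprime_iff_gcd_eq_one.mp hbc.symm.pow_right) (Int.odd_iff.mp hc) (by positivity)
  replace hmn := Int.isCoprime_iff_gcd_eq_one.mpr hmn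
  rcases hparity with ⟨hm, hn⟩ | ⟨hm, hn⟩
  · exact exists_natAbs_lt_of_sq_add_sq hmn.symm (Int.odd_iff.mpr hn) (Int.even_iff.mpr hm)
      (by linear_combination ha2) (by linear_combination hb2) hb0
  · exact exists_natAbs_lt_of_sq_add_sq hmn (Int.odd_iff.mpr hm) (Int.even_iff.mpr hn) ha2 hb2 hb0

theorem exists_natAbs_lt (h : FermatRightTriangle a b c) :
    ∃ a' b' c', FermatRightTriangle a' b' c' ∧ a'.natAbs < a.natAbs := by
  obtain ⟨a', b', c', h', hab, hle⟩ := h.exists_isCoprime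
  obtain ⟨a'', b'', c'', h'', hlt⟩ := (Int.even_or_odd b').elim
    (h'.exists_natAbs_lt_of_even hab) (h'.exists_natAbs_lt_of_odd hab)
  exact ⟨a'', b'', c'', h'', hlt.trans_le hle⟩

end FermatRightTriangle

theorem not_fermatRightTriangle (a b c : ℤ) : ¬FermatRightTriangle a b c := by
  induction hn : a.natAbs using Nat.strong_induction_on generalizing a b c with
  | _ n ih =>
    intro h
    obtain ⟨a', b', c', h', hlt⟩ := h.exists_natAbs_lt
    exact ih _ (hn ▸ hlt) a' b' c' rfl h'

theorem x_pow_four_add_one_eq_two_sq_general (x y : ℕ) (hx : 0 < x)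
    (h : x ^ 4 + 1 = 2 * y ^ 2) : x = 1 ∧ y = 1 := by
  have hz : (x : ℤ) ^ 4 + 1 = 2 * (y : ℤ) ^ 2 := by exact_mod_cast h
  have hx4 : x ^ 4 = 1 := by
    by_contra hx4
    have hx4' : (x : ℤ) ^ 4 - 1 ≠ 0 := sub_ne_zero.mpr (by exact_mod_cast hx4)
    refine not_fermatRightTriangle (2 * y) (2 * x) (2 * (x ^ 4 - 1))
      ⟨by positivity, mul_ne_zero two_ne_zero hx4', ?_⟩
    linear_combination (-4 * (2 * (y : ℤ) ^ 2 + x ^ 4 + 1)) * hz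
  obtain rfl : x = 1 := (Nat.pow_eq_one.mp hx4).resolve_right four_ne_zero
  exact ⟨rfl, (Nat.pow_eq_one.mp (by omega : y ^ 2 = 1)).resolve_right two_ne_zero⟩

theorem x_pow_four_add_one_eq_two_sq (x y : ℕ) (hx : 0 < x) (hy : 0 < y)
    (h : x ^ 4 + 1 = 2 * y ^ 2) : x = 1 ∧ y = 1 :=
  x_pow_four_add_one_eq_two_sq_general x y hx h
end

section
/- If N is an odd positive integer satisfying σ_∞(σ_∞(N)) = 2N, then σ_∞(N) has at most 2 distinct prime factors. -/
/-!
Every odd prime `p ∣ M` contributes an even factor `p ^ 2 ^ j + 1` to `σ_∞(M)`, so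
`2 ^ #{odd primes of M} ∣ σ_∞(M)`. For `M = σ_∞(N)` this divides `2N` with `N` odd, so `M` has
at most one odd prime factor; together with the prime `2`, at most two.
-/

open Finset

lemma two_dvd_prod_testBit {p e : ℕ} (hp : Odd p) (he : e ≠ 0) :
    2 ∣ ∏ j ∈ range e, if e.testBit j then p ^ 2 ^ j + 1 else 1 := by
  obtain ⟨j, hj⟩ := Nat.exists_testBit_of_ne_zero he
  have hje : j ∈ range e := mem_range.2 (j.lt_two_pow_self.trans_le (Nat.ge_two_pow_of_testBit hj))
  have hfactor := dvd_prod_of_mem (fun j => if e.testBit j then p ^ 2 ^ j + 1 else 1) hje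
  rw [if_pos hj] at hfactor
  exact (hp.pow.add_one.two_dvd).trans hfactor

lemma two_pow_card_odd_primeFactors_dvd_infsigma (n : ℕ) :
    2 ^ #{p ∈ n.primeFactors | Odd p} ∣ infsigma n := by
  rw [infsigma, Finsupp.prod, Nat.support_factorization, ← prod_filter_mul_prod_filter_not _ Odd,
    ← prod_const]
  refine dvd_mul_of_dvd_left (prod_dvd_prod_of_dvd _ _ fun p hp => ?_) _
  obtain ⟨hpn, hodd⟩ := mem_filter.1 hp
  exact two_dvd_prod_testBit hodd (Finsupp.mem_support_iff.1 (n.support_factorization ▸ hpn))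

lemma card_primeFactors_le_card_odd_primeFactors_add_one (n : ℕ) :
    #n.primeFactors ≤ #{p ∈ n.primeFactors | Odd p} + 1 := by
  have heven : {p ∈ n.primeFactors | ¬Odd p} ⊆ {2} := fun p hp => by
    obtain ⟨hpn, hp⟩ := mem_filter.1 hp
    exact mem_singleton.2 ((Nat.prime_of_mem_primeFactors hpn).eq_two_or_odd'.resolve_right hp)
  rw [← card_filter_add_card_filter_not (s := n.primeFactors) Odd]
  exact Nat.add_le_add_left ((card_le_card heven).trans (card_singleton 2).le) _

lemma le_one_of_two_pow_dvd_two_mul_of_odd {k n : ℕ} (hn : Odd n) (h : 2 ^ k ∣ 2 * n) : k ≤ 1 := by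
  by_contra! hk
  have h4 : 2 * 2 ∣ 2 * n := (pow_dvd_pow 2 hk).trans h
  exact Nat.not_even_iff_odd.2 hn (even_iff_two_dvd.2 (Nat.dvd_of_mul_dvd_mul_left two_pos h4))

theorem omega_infsigma_le_two_of_odd_superperfect_general (N : ℕ) (hodd : Odd N)
    (h : infsigma (infsigma N) = 2 * N) :
    (infsigma N).primeFactors.card ≤ 2 := by
  have hdvd := two_pow_card_odd_primeFactors_dvd_infsigma (infsigma N)
  rw [h] at hdvd
  have hodd_card := le_one_of_two_pow_dvd_two_mul_of_odd hodd hdvd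
  have := card_primeFactors_le_card_odd_primeFactors_add_one (infsigma N)
  omega

theorem omega_infsigma_le_two_of_odd_superperfect (N : ℕ) (hN : 0 < N) (hodd : Odd N)
    (h : infsigma (infsigma N) = 2 * N) :
    (infsigma N).primeFactors.card ≤ 2 :=
  omega_infsigma_le_two_of_odd_superperfect_general N hodd h
end
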